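/- For every positive integer n, the number of pairs (α, β), where α is a partition obtained from the staircase partition δ_n by adding one box (δ_n ⊆ α, |α| = |δ_n| + 1), β is a partition different from δ_n with |β| = |δ_n| and |β ∩ δ_n| = |δ_n| − 1, and α and β differ by one box, equals n(n−1). -/

import Mathlib

/-- A partition: a weakly decreasing finitely supported sequence of naturals. -/
def IsPartition (f : ℕ →₀ ℕ) : Prop := ∀ ⦃i j : ℕ⦄, i ≤ j → f j ≤ f i

/-- The size `|λ|` of a partition: the sum of its parts. -/
noncomputable def psize (f : ℕ →₀ ℕ) : ℕ := f.sum fun _ n => n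

/-- The intersection of two partitions: pointwise minimum. -/
noncomputable def pinter (f g : ℕ →₀ ℕ) : ℕ →₀ ℕ := Finsupp.zipWith min (min_self 0) f g

/-- Two partitions differ by one box: they are distinct and
`|λ ∩ μ| = max(|λ|,|μ|) − 1`. -/
noncomputable def DifferByOneBox (f g : ℕ →₀ ℕ) : Prop :=
  f ≠ g ∧ psize (pinter f g) + 1 = max (psize f) (psize g)

/-- The staircase partition `δ_n = (n, n−1, …, 2, 1)` (0-indexed). -/
noncomputable def staircase (n : ℕ) : ℕ →₀ ℕ :=
  Finsupp.onFinset (Finset.range n) (fun i => n - i)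
    (fun a ha => Finset.mem_range.mpr (Nat.lt_of_sub_ne_zero ha))

/-!
Index a pair by the row `i` from which `β` takes a box of `δ_n` and the row `j` to which it moves
it (rows are 0-indexed, row `i` of `δ_n` has length `n - i`). As `α` and `β` differ by one box and
`|α| = |β| + 1`, `β ⊆ α`; since `α` adds a single box to `δ_n`, it must be the box `β` adds, so
`α = δ_n + e_j` and `β = δ_n - e_i + e_j`.
Such a `β` is a partition exactly when `j ≤ n` and `j ∉ {i, i + 1}`, which leaves `n - 1` rows `j`
for each of the `n` rows `i`.
-/

open Finset Finsupp

lemma psize_eq_degree (f : ℕ →₀ ℕ) : psize f = f.degree := rfl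

lemma pinter_eq_inf (f g : ℕ →₀ ℕ) : pinter f g = f ⊓ g := rfl

lemma psize_add (f g : ℕ →₀ ℕ) : psize (f + g) = psize f + psize g := map_add degree f g

lemma psize_single_one (i : ℕ) : psize (single i 1) = 1 := degree_single i 1

lemma eq_of_le_of_psize_eq {f g : ℕ →₀ ℕ} (hle : f ≤ g) (hs : psize g = psize f) : f = g := by
  obtain ⟨d, rfl⟩ := le_iff_exists_add.mp hle
  rw [psize_add, add_eq_left, psize_eq_degree, degree_eq_zero_iff] at hs
  rw [hs, add_zero]

lemma exists_eq_add_single_of_le {f g : ℕ →₀ ℕ} (hle : f ≤ g) (hs : psize g = psize f + 1) :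
    ∃ j, g = f + single j 1 := by
  obtain ⟨d, rfl⟩ := le_iff_exists_add.mp hle
  rw [psize_add, add_right_inj] at hs
  obtain ⟨j, rfl⟩ := (sum_eq_one_iff d).mp hs
  exact ⟨j, rfl⟩

lemma differByOneBox_iff_le {f g : ℕ →₀ ℕ} (hs : psize f = psize g + 1) :
    DifferByOneBox f g ↔ g ≤ f := by
  rw [DifferByOneBox, pinter_eq_inf, hs, max_eq_left (Nat.le_succ _), add_left_inj]
  constructor
  · rintro ⟨-, h⟩
    exact inf_eq_right.mp (eq_of_le_of_psize_eq inf_le_right h.symm)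
  · intro h
    exact ⟨by rintro rfl; omega, by rw [inf_eq_right.mpr h]⟩

lemma staircase_apply (n i : ℕ) : staircase n i = n - i := rfl

lemma single_le_staircase_iff {n i : ℕ} : single i 1 ≤ staircase n ↔ i < n := by
  rw [single_le_iff, staircase_apply]
  omega

lemma psize_staircase_sub_single {n i : ℕ} (hi : i < n) :
    psize (staircase n - single i 1) + 1 = psize (staircase n) := by
  conv_rhs => rw [← tsub_add_cancel_of_le (single_le_staircase_iff.mpr hi)]
  rw [psize_add, psize_single_one]

lemma isPartition_staircase_add_single {n j : ℕ} (hj : j ≤ n) :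
    IsPartition (staircase n + single j 1) := by
  intro a b hab
  simp only [Finsupp.add_apply, single_apply, staircase_apply]
  split_ifs <;> omega

lemma staircase_sub_add_single_apply (n i j a : ℕ) :
    (staircase n - single i 1 + single j 1 : ℕ →₀ ℕ) a =
      n - a - (if i = a then 1 else 0) + (if j = a then 1 else 0) := by
  rw [Finsupp.add_apply, tsub_apply, single_apply, single_apply, staircase_apply]

lemma isPartition_staircase_sub_add_single_iff {n i j : ℕ} (hi : i < n) (hji : j ≠ i) :
    IsPartition (staircase n - single i 1 + single j 1) ↔ j ≤ n ∧ j ≠ i + 1 := by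
  simp only [IsPartition, staircase_sub_add_single_apply]
  constructor
  · intro h
    refine ⟨?_, ?_⟩
    · by_contra hjn
      have := h (Nat.sub_le j 1)
      split_ifs at this <;> omega
    · rintro rfl
      have := h (Nat.le_succ i)
      split_ifs at this <;> omega
  · rintro ⟨hjn, hji'⟩ a b hab
    split_ifs <;> omega

lemma staircase_sub_add_single_inf {n i j : ℕ} (hji : j ≠ i) :
    (staircase n - single i 1 + single j 1) ⊓ staircase n = staircase n - single i 1 := by
  ext a
  simp only [inf_apply, staircase_sub_add_single_apply, tsub_apply, single_apply, staircase_apply]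
  split_ifs <;> omega

def AddMovePair (n : ℕ) (α β : ℕ →₀ ℕ) : Prop :=
  IsPartition α ∧ IsPartition β ∧
    (∀ i, staircase n i ≤ α i) ∧ psize α = psize (staircase n) + 1 ∧
    β ≠ staircase n ∧ psize β = psize (staircase n) ∧
    psize (pinter β (staircase n)) + 1 = psize (staircase n) ∧
    DifferByOneBox α β

def addMoveIndices (n : ℕ) : Finset (ℕ × ℕ) :=
  (range n ×ˢ range (n + 1)).filter fun q => q.2 ≠ q.1 ∧ q.2 ≠ q.1 + 1

noncomputable def addMovePairOf (n : ℕ) (q : ℕ × ℕ) : (ℕ →₀ ℕ) × (ℕ →₀ ℕ) :=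
  (staircase n + single q.2 1, staircase n - single q.1 1 + single q.2 1)

lemma mem_addMoveIndices {n i j : ℕ} :
    (i, j) ∈ addMoveIndices n ↔ i < n ∧ j ≤ n ∧ j ≠ i ∧ j ≠ i + 1 := by
  simp only [addMoveIndices, mem_filter, mem_product, mem_range]
  omega

lemma card_addMoveIndices (n : ℕ) : (addMoveIndices n).card = n * (n - 1) := by
  have hrow : ∀ i ∈ range n, ((range (n + 1)).filter fun j => j ≠ i ∧ j ≠ i + 1).card = n - 1 := by
    intro i hi
    have hsub : {i, i + 1} ⊆ range (n + 1) := by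
      simp only [insert_subset_iff, singleton_subset_iff, mem_range]
      simp only [mem_range] at hi
      omega
    have hrow_eq :
        ((range (n + 1)).filter fun j => j ≠ i ∧ j ≠ i + 1) = range (n + 1) \ {i, i + 1} := by
      ext j
      simp only [mem_filter, mem_sdiff, mem_insert, mem_singleton]
      tauto
    rw [hrow_eq, card_sdiff_of_subset hsub, card_range, card_pair (by omega)]
    omega
  rw [addMoveIndices, card_filter, sum_product]
  simp_rw [← card_filter]
  rw [sum_congr rfl hrow, sum_const, card_range, smul_eq_mul]

lemma AddMovePair.exists_mem_addMoveIndices {n : ℕ} {α β : ℕ →₀ ℕ} (h : AddMovePair n α β) :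
    ∃ q ∈ addMoveIndices n, addMovePairOf n q = (α, β) := by
  obtain ⟨-, hβ, hδα, hsα, hβδ, hsβ, hsinf, hdiff⟩ := h
  rw [pinter_eq_inf] at hsinf
  have hβα : β ≤ α := (differByOneBox_iff_le (by rw [hsα, hsβ])).mp hdiff
  obtain ⟨k, rfl⟩ := exists_eq_add_single_of_le hδα hsα
  obtain ⟨i, hi⟩ := exists_eq_add_single_of_le inf_le_right hsinf.symm
  obtain ⟨j, hj⟩ := exists_eq_add_single_of_le inf_le_left (hsβ.trans hsinf.symm)
  generalize β ⊓ staircase n = m at hi hj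
  have hji : j ≠ i := by
    rintro rfl
    exact hβδ (hj.trans hi.symm)
  have hkj : k = j := by
    have := hβα j
    simp only [hj, hi, Finsupp.add_apply, single_apply] at this
    split_ifs at this <;> omega
  have hin : i < n := single_le_staircase_iff.mp (hi ▸ le_add_self)
  have hβ_eq : β = staircase n - single i 1 + single j 1 := by
    rw [hj, eq_tsub_of_add_eq hi.symm]
  obtain ⟨hjn, hji'⟩ := (isPartition_staircase_sub_add_single_iff hin hji).mp (hβ_eq ▸ hβ)
  exact ⟨(i, j), mem_addMoveIndices.mpr ⟨hin, hjn, hji, hji'⟩, by rw [addMovePairOf, hkj, hβ_eq]⟩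

lemma addMovePair_of_mem_addMoveIndices {n i j : ℕ} (hq : (i, j) ∈ addMoveIndices n) :
    AddMovePair n (staircase n + single j 1) (staircase n - single i 1 + single j 1) := by
  obtain ⟨hin, hjn, hji, hji'⟩ := mem_addMoveIndices.mp hq
  have hsα : psize (staircase n + single j 1) = psize (staircase n) + 1 := by
    rw [psize_add, psize_single_one]
  have hsβ : psize (staircase n - single i 1 + single j 1) = psize (staircase n) := by
    rw [psize_add, psize_single_one, psize_staircase_sub_single hin]
  have hsinf : psize (pinter (staircase n - single i 1 + single j 1) (staircase n)) + 1 =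
      psize (staircase n) := by
    rw [pinter_eq_inf, staircase_sub_add_single_inf hji, psize_staircase_sub_single hin]
  refine ⟨isPartition_staircase_add_single hjn,
    (isPartition_staircase_sub_add_single_iff hin hji).mpr ⟨hjn, hji'⟩,
    fun a => le_self_add, hsα, ?_,
    hsβ, hsinf, (differByOneBox_iff_le (by rw [hsα, hsβ])).mpr (add_le_add_left tsub_le_self _)⟩
  intro hβ
  rw [hβ, pinter_eq_inf, inf_idem] at hsinf
  omega

lemma injOn_addMovePairOf (n : ℕ) : Set.InjOn (addMovePairOf n) (addMoveIndices n) := by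
  rintro ⟨i, j⟩ hq ⟨i', j'⟩ hq' h
  obtain ⟨hin, -⟩ := mem_addMoveIndices.mp hq
  obtain ⟨hin', -⟩ := mem_addMoveIndices.mp hq'
  simp only [addMovePairOf, Prod.mk.injEq] at h
  obtain ⟨hα, hβ⟩ := h
  have hj : j = j' := single_left_injective one_ne_zero (add_left_cancel hα)
  subst hj
  have hi : single i 1 = single i' 1 :=
    (tsub_right_inj (single_le_staircase_iff.mpr hin) (single_le_staircase_iff.mpr hin')).mp
      (add_right_cancel hβ)
  rw [single_left_injective one_ne_zero hi]

lemma setOf_addMovePair (n : ℕ) :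
    {p : (ℕ →₀ ℕ) × (ℕ →₀ ℕ) | AddMovePair n p.1 p.2} = addMovePairOf n '' addMoveIndices n := by
  ext p
  refine ⟨AddMovePair.exists_mem_addMoveIndices, ?_⟩
  rintro ⟨⟨i, j⟩, hq, rfl⟩
  exact addMovePair_of_mem_addMoveIndices hq

theorem staircase_add_move_pairs_general (n : ℕ) :
    {p : (ℕ →₀ ℕ) × (ℕ →₀ ℕ) | IsPartition p.1 ∧ IsPartition p.2 ∧
      (∀ i, staircase n i ≤ p.1 i) ∧ psize p.1 = psize (staircase n) + 1 ∧
      p.2 ≠ staircase n ∧ psize p.2 = psize (staircase n) ∧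
      psize (pinter p.2 (staircase n)) + 1 = psize (staircase n) ∧
      DifferByOneBox p.1 p.2}.ncard = n * (n - 1) := by
  change {p : (ℕ →₀ ℕ) × (ℕ →₀ ℕ) | AddMovePair n p.1 p.2}.ncard = n * (n - 1)
  rw [setOf_addMovePair, (injOn_addMovePairOf n).ncard_image, Set.ncard_coe_finset,
    card_addMoveIndices]

/-- the number of pairs `(α, β)` with `α` obtained from `δ_n` by adding
a box, `β` obtained from `δ_n` by moving a box, which differ by one box, is `n(n−1)`. -/
theorem staircase_add_move_pairs (n : ℕ) (hn : 0 < n) :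
    {p : (ℕ →₀ ℕ) × (ℕ →₀ ℕ) | IsPartition p.1 ∧ IsPartition p.2 ∧
      (∀ i, staircase n i ≤ p.1 i) ∧ psize p.1 = psize (staircase n) + 1 ∧
      p.2 ≠ staircase n ∧ psize p.2 = psize (staircase n) ∧
      psize (pinter p.2 (staircase n)) + 1 = psize (staircase n) ∧
      DifferByOneBox p.1 p.2}.ncard = n * (n - 1) :=
  staircase_add_move_pairs_general n
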